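/- arXiv:1812.04836 — 2 statements merged into one kernel-verified Lean document; each statement's English description precedes it below -/
import Mathlib

section
/- Let m > 0, d ≥ 1, and 0 < δ < m. For each N ≥ 1, the set R of parameters ν ∈ [1,2]^d for which there exists n ∈ ℤ^d with |n| ≤ N (sup norm) and |∑_{i=1}^d ν_i² n_i² − m| ≤ δ has Lebesgue measure at most C·N^d·δ^{1/2}, where C = C(d,m) depends only on d and m. -/
/-!
For a fixed `n ≠ 0`, pick a coordinate `j` with `n j ≠ 0`. Along the line in direction `j` the
function `ν ↦ ∑ ν_i² n_i²` has derivative `2 ν_j n_j² ≥ 2` on `[1,2]^d`, so each such line meets the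
resonant set of `n` in a set of diameter at most `δ`; by Fubini that set has measure at most `δ`.
For `n = 0` it is empty since `δ < m`. Summing over the `(2N+1)^d ≤ (3N)^d` lattice points of the
box and using `δ ≤ √m √δ` gives the bound.
-/

open MeasureTheory Set

def resonantSet {ι : Type*} [Fintype ι] (m δ : ℝ) (n : ι → ℤ) : Set (ι → ℝ) :=
  {ν | (∀ i, ν i ∈ Icc (1 : ℝ) 2) ∧ |∑ i, ν i ^ 2 * (n i : ℝ) ^ 2 - m| ≤ δ}

lemma abs_sub_le_of_abs_sq_mul_add_sub_le {c r m δ x y : ℝ} (hc : 1 ≤ c) (hx : 1 ≤ x)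
    (hy : 1 ≤ y) (h₁ : |x ^ 2 * c + r - m| ≤ δ) (h₂ : |y ^ 2 * c + r - m| ≤ δ) :
    |x - y| ≤ δ := by
  have hfactor : 0 < (x + y) * c := by positivity
  have hdiff : |x - y| * 2 ≤ 2 * δ :=
    calc |x - y| * 2 ≤ |x - y| * ((x + y) * c) := by gcongr; nlinarith
      _ = |(x ^ 2 * c + r - m) - (y ^ 2 * c + r - m)| := by
          rw [← abs_of_pos hfactor, ← abs_mul]
          ring_nf
      _ ≤ |x ^ 2 * c + r - m| + |y ^ 2 * c + r - m| := abs_sub _ _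
      _ ≤ 2 * δ := by linarith
  linarith

lemma volume_setOf_abs_sq_mul_add_sub_le {c r m δ : ℝ} (hc : 1 ≤ c) :
    volume {x : ℝ | 1 ≤ x ∧ |x ^ 2 * c + r - m| ≤ δ} ≤ ENNReal.ofReal δ := by
  refine (Real.volume_le_diam _).trans (Metric.ediam_le ?_)
  rintro x ⟨hx, hxδ⟩ y ⟨hy, hyδ⟩
  rw [edist_dist, Real.dist_eq]
  exact ENNReal.ofReal_le_ofReal (abs_sub_le_of_abs_sq_mul_add_sub_le hc hx hy hxδ hyδ)

lemma volume_le_mul_of_volume_fiber_le {k : ℕ} (j : Fin (k + 1)) {S : Set (Fin (k + 1) → ℝ)}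
    (hS : MeasurableSet S) {T : Set (Fin k → ℝ)} (hST : ∀ ν ∈ S, j.removeNth ν ∈ T)
    {ε : ENNReal} (hfiber : ∀ w ∈ T, volume {x | j.insertNth x w ∈ S} ≤ ε) :
    volume S ≤ ε * volume T := by
  let e := MeasurableEquiv.piFinSuccAbove (fun _ : Fin (k + 1) => ℝ) j
  have hfiber' : ∀ w, volume {x | j.insertNth x w ∈ S} ≤ T.indicator (fun _ => ε) w := by
    intro w
    by_cases hw : w ∈ T
    · simpa [indicator_of_mem hw] using hfiber w hw
    · have hempty : {x | j.insertNth x w ∈ S} = ∅ :=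
        eq_empty_of_forall_notMem fun x hx => hw (by simpa using hST _ hx)
      simp [hempty]
  calc volume S = volume (e.symm ⁻¹' S) :=
        ((volume_preserving_piFinSuccAbove (fun _ => ℝ) j).symm e
          |>.measure_preimage hS.nullMeasurableSet).symm
    _ = ∫⁻ w, volume {x | j.insertNth x w ∈ S} := by
        rw [Measure.volume_eq_prod, Measure.prod_apply_symm (e.symm.measurable hS)]
        rfl
    _ ≤ ∫⁻ w, T.indicator (fun _ => ε) w := lintegral_mono hfiber'
    _ ≤ ε * volume T := lintegral_indicator_const_le T ε

lemma isClosed_resonantSet {ι : Type*} [Fintype ι] (m δ : ℝ) (n : ι → ℤ) :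
    IsClosed (resonantSet m δ n) := by
  have hcube : IsClosed {ν : ι → ℝ | ∀ i, ν i ∈ Icc (1 : ℝ) 2} := by
    simp only [ofPred_forall]
    exact isClosed_iInter fun i => isClosed_Icc.preimage (continuous_apply i)
  exact hcube.inter <| isClosed_le
    (f := fun ν : ι → ℝ => |∑ i, ν i ^ 2 * (n i : ℝ) ^ 2 - m|) (by fun_prop) continuous_const

lemma volume_resonantSet_le {d : ℕ} (m δ : ℝ) {n : Fin d → ℤ} (hn : n ≠ 0) :
    volume (resonantSet m δ n) ≤ ENNReal.ofReal δ := by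
  obtain ⟨j, hj⟩ : ∃ j, n j ≠ 0 := Function.ne_iff.mp hn
  obtain ⟨k, rfl⟩ : ∃ k, d = k + 1 := Nat.exists_eq_succ_of_ne_zero (Fin.pos j).ne'
  have hc : (1 : ℝ) ≤ (n j : ℝ) ^ 2 := by
    have : (1 : ℤ) ≤ n j ^ 2 := by nlinarith [Int.one_le_abs hj, sq_abs (n j)]
    exact_mod_cast this
  have hcube : volume (Set.univ.pi fun _ : Fin k => Icc (1 : ℝ) 2) = 1 := by
    rw [volume_pi_pi]
    norm_num [Real.volume_Icc]
  calc volume (resonantSet m δ n)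
      ≤ ENNReal.ofReal δ * volume (Set.univ.pi fun _ : Fin k => Icc (1 : ℝ) 2) := by
        refine volume_le_mul_of_volume_fiber_le j (isClosed_resonantSet m δ n).measurableSet
          (T := univ.pi fun _ => Icc 1 2) (fun ν hν i _ => hν.1 _) fun w _ =>
            (measure_mono ?_).trans <| volume_setOf_abs_sq_mul_add_sub_le (m := m)
              (r := ∑ i, w i ^ 2 * (n (j.succAbove i) : ℝ) ^ 2) hc
        rintro x ⟨hxcube, hxδ⟩
        rw [Fin.sum_univ_succAbove _ j] at hxδ
        simp only [Fin.insertNth_apply_same, Fin.insertNth_apply_succAbove] at hxδ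
        exact ⟨by simpa using (hxcube j).1, hxδ⟩
    _ = ENNReal.ofReal δ := by rw [hcube, mul_one]

lemma resonantSet_zero_eq_empty {ι : Type*} [Fintype ι] {m δ : ℝ} (hδm : δ < m) :
    resonantSet m δ (0 : ι → ℤ) = ∅ := by
  refine eq_empty_of_forall_notMem fun ν ⟨_, hν⟩ => ?_
  simp only [Pi.zero_apply, Int.cast_zero, ne_eq, OfNat.ofNat_ne_zero, not_false_eq_true,
    zero_pow, mul_zero, Finset.sum_const_zero, zero_sub, abs_neg] at hν
  linarith [le_abs_self m]

lemma card_piFinset_Icc_neg_self (d N : ℕ) :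
    (Fintype.piFinset fun _ : Fin d => Finset.Icc (-(N : ℤ)) N).card = (2 * N + 1) ^ d := by
  simp only [Fintype.card_piFinset, Int.card_Icc, Finset.prod_const, Finset.card_univ,
    Fintype.card_fin]
  congr 1
  omega

lemma two_mul_add_one_pow_mul_le {d N : ℕ} (hN : 1 ≤ N) {m δ : ℝ} (hδ : 0 ≤ δ) (hδm : δ ≤ m) :
    ((2 * N + 1 : ℕ) : ℝ) ^ d * δ ≤ 3 ^ d * Real.sqrt m * (N : ℝ) ^ d * Real.sqrt δ := by
  have hbox : ((2 * N + 1 : ℕ) : ℝ) ^ d ≤ (3 * (N : ℝ)) ^ d := by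
    gcongr
    push_cast
    linarith [(Nat.one_le_cast (α := ℝ)).mpr hN]
  have hδ_le : δ ≤ Real.sqrt m * Real.sqrt δ := by
    calc δ = Real.sqrt δ * Real.sqrt δ := (Real.mul_self_sqrt hδ).symm
      _ ≤ Real.sqrt m * Real.sqrt δ := by gcongr
  calc ((2 * N + 1 : ℕ) : ℝ) ^ d * δ ≤ (3 * (N : ℝ)) ^ d * (Real.sqrt m * Real.sqrt δ) :=
        mul_le_mul hbox hδ_le hδ (by positivity)
    _ = 3 ^ d * Real.sqrt m * (N : ℝ) ^ d * Real.sqrt δ := by ring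

theorem stmt_2_general (d : ℕ) (m : ℝ) (hm : 0 < m) :
    ∃ C > 0, ∀ δ : ℝ, 0 < δ → δ < m → ∀ N : ℕ, 1 ≤ N →
      volume {ν : Fin d → ℝ | (∀ i, ν i ∈ Set.Icc (1 : ℝ) 2) ∧
        ∃ n : Fin d → ℤ, (∀ i, |n i| ≤ (N : ℤ)) ∧
          |∑ i, (ν i) ^ 2 * (n i : ℝ) ^ 2 - m| ≤ δ}
      ≤ ENNReal.ofReal (C * (N : ℝ) ^ d * Real.sqrt δ) := by
  refine ⟨3 ^ d * Real.sqrt m, by positivity, fun δ hδ hδm N hN => ?_⟩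
  let box := Fintype.piFinset fun _ : Fin d => Finset.Icc (-(N : ℤ)) N
  have hcover : {ν : Fin d → ℝ | (∀ i, ν i ∈ Set.Icc (1 : ℝ) 2) ∧
      ∃ n : Fin d → ℤ, (∀ i, |n i| ≤ (N : ℤ)) ∧ |∑ i, (ν i) ^ 2 * (n i : ℝ) ^ 2 - m| ≤ δ}
      ⊆ ⋃ n ∈ box, resonantSet m δ n := by
    rintro ν ⟨hν, n, hnN, hνn⟩
    exact mem_biUnion (Fintype.mem_piFinset.mpr fun i => Finset.mem_Icc.mpr (abs_le.mp (hnN i)))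
      ⟨hν, hνn⟩
  have hpiece : ∀ n : Fin d → ℤ, volume (resonantSet m δ n) ≤ ENNReal.ofReal δ := fun n => by
    rcases eq_or_ne n 0 with rfl | hn
    · simp [resonantSet_zero_eq_empty hδm]
    · exact volume_resonantSet_le m δ hn
  calc _ ≤ ∑ n ∈ box, volume (resonantSet m δ n) :=
        (measure_mono hcover).trans (measure_biUnion_finset_le _ _)
    _ ≤ box.card * ENNReal.ofReal δ := by
        simpa using Finset.sum_le_sum fun n (_ : n ∈ box) => hpiece n
    _ = ENNReal.ofReal (((2 * N + 1 : ℕ) : ℝ) ^ d * δ) := by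
        rw [card_piFinset_Icc_neg_self, ENNReal.ofReal_mul (by positivity), ← Nat.cast_pow,
          ENNReal.ofReal_natCast]
    _ ≤ _ := ENNReal.ofReal_le_ofReal (two_mul_add_one_pow_mul_le hN hδ.le hδm.le)

theorem stmt_2 (d : ℕ) (hd : 1 ≤ d) (m : ℝ) (hm : 0 < m) :
    ∃ C > 0, ∀ δ : ℝ, 0 < δ → δ < m → ∀ N : ℕ, 1 ≤ N →
      volume {ν : Fin d → ℝ | (∀ i, ν i ∈ Set.Icc (1 : ℝ) 2) ∧
        ∃ n : Fin d → ℤ, (∀ i, |n i| ≤ (N : ℤ)) ∧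
          |∑ i, (ν i) ^ 2 * (n i : ℝ) ^ 2 - m| ≤ δ}
      ≤ ENNReal.ofReal (C * (N : ℝ) ^ d * Real.sqrt δ) :=
  stmt_2_general d m hm
end

section
/- Let m > 0 and δ > 0. For each fixed nonzero n ∈ ℤ^d, the Lebesgue measure of the set of ν ∈ [1,2]^d such that |∑_{i=1}^d ν_i² n_i² − m| < δ is at most C·δ, where C depends only on d (in fact C·δ/max_i n_i² suffices when n ≠ 0). -/
open MeasureTheory

/-!
Slice along a coordinate `i` with `n i ≠ 0`. With the other coordinates fixed, the condition
confines `ν i ^ 2` to an interval of length `2δ / n i ^ 2`; as `ν i ≥ 1`, the square root at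
most halves lengths there, so `ν i` ranges over an interval of length `δ / n i ^ 2 ≤ δ`.
Integrating over the unit cube `[1,2]^(d-1)` of remaining coordinates gives the bound with `C = 1`.
-/

theorem volume_setOf_one_le_sq_mem_Ioo_le (a b : ℝ) :
    volume {x : ℝ | 1 ≤ x ∧ x ^ 2 ∈ Set.Ioo a b} ≤ ENNReal.ofReal ((b - a) / 2) := by
  set L := max 1 a
  have hL : 1 ≤ √L := Real.one_le_sqrt.mpr (le_max_left _ _)
  have hL_sq : √L ^ 2 = L := Real.sq_sqrt (by positivity)
  have hsub : {x : ℝ | 1 ≤ x ∧ x ^ 2 ∈ Set.Ioo a b} ⊆ Set.Icc (√L) (√L + (b - a) / 2) := by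
    rintro x ⟨hx, hax, hxb⟩
    have hLx : L ≤ x ^ 2 := max_le (by nlinarith) hax.le
    have hLa : a ≤ L := le_max_right _ _
    have hle : √L ≤ x := (Real.sqrt_le_sqrt hLx).trans_eq (Real.sqrt_sq (by linarith))
    -- `x - √L = (x ^ 2 - L) / (x + √L)` with `x + √L ≥ 2`
    exact ⟨hle, by nlinarith⟩
  calc volume {x : ℝ | 1 ≤ x ∧ x ^ 2 ∈ Set.Ioo a b}
      ≤ volume (Set.Icc (√L) (√L + (b - a) / 2)) := measure_mono hsub
    _ = ENNReal.ofReal ((b - a) / 2) := by rw [Real.volume_Icc, add_sub_cancel_left]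

theorem volume_setOf_abs_sq_mul_sub_lt_le {c : ℝ} (hc : 0 < c) (B δ : ℝ) :
    volume {x : ℝ | 1 ≤ x ∧ |x ^ 2 * c - B| < δ} ≤ ENNReal.ofReal (δ / c) := by
  have hsub : {x : ℝ | 1 ≤ x ∧ |x ^ 2 * c - B| < δ} ⊆
      {x : ℝ | 1 ≤ x ∧ x ^ 2 ∈ Set.Ioo ((B - δ) / c) ((B + δ) / c)} := by
    rintro x ⟨hx, hxδ⟩
    rw [abs_sub_lt_iff] at hxδ
    exact ⟨hx, (div_lt_iff₀ hc).mpr (by linarith), (lt_div_iff₀ hc).mpr (by linarith)⟩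
  calc _ ≤ _ := measure_mono hsub
    _ ≤ _ := volume_setOf_one_le_sq_mem_Ioo_le _ _
    _ = ENNReal.ofReal (δ / c) := by congr 1; field_simp; ring

theorem volume_eq_lintegral_volume_insertNth {k : ℕ} (i : Fin (k + 1))
    {S : Set (Fin (k + 1) → ℝ)} (hS : MeasurableSet S) :
    volume S = ∫⁻ y : Fin k → ℝ, volume {x : ℝ | i.insertNth x y ∈ S} := by
  have he := (volume_preserving_piFinSuccAbove (fun _ : Fin (k + 1) => ℝ) i).symm
  rw [← he.measure_preimage hS.nullMeasurableSet, Measure.volume_eq_prod,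
    Measure.prod_apply_symm (he.measurable hS)]
  rfl

theorem volume_smallDivisor_le {k : ℕ} (n : Fin (k + 1) → ℤ) {i : Fin (k + 1)} (hi : n i ≠ 0)
    (m δ : ℝ) :
    volume {ν : Fin (k + 1) → ℝ | (∀ j, ν j ∈ Set.Icc (1 : ℝ) 2) ∧
        |∑ j, (ν j) ^ 2 * (n j : ℝ) ^ 2 - m| < δ} ≤ ENNReal.ofReal (δ / (n i : ℝ) ^ 2) := by
  set S := {ν : Fin (k + 1) → ℝ | (∀ j, ν j ∈ Set.Icc (1 : ℝ) 2) ∧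
    |∑ j, (ν j) ^ 2 * (n j : ℝ) ^ 2 - m| < δ}
  set cube := Set.univ.pi fun _ : Fin k => Set.Icc (1 : ℝ) 2
  have hS : MeasurableSet S := by measurability
  have hslice : ∀ y, volume {x | i.insertNth x y ∈ S} ≤
      cube.indicator (fun _ => ENNReal.ofReal (δ / (n i : ℝ) ^ 2)) y := by
    intro y
    have hmem : ∀ x, i.insertNth x y ∈ S ↔ (x ∈ Set.Icc (1 : ℝ) 2 ∧ y ∈ cube) ∧
        |x ^ 2 * (n i : ℝ) ^ 2 - (m - ∑ j, (y j) ^ 2 * (n (i.succAbove j) : ℝ) ^ 2)| < δ := by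
      intro x
      simp only [S, cube, Set.mem_ofPred_eq, Set.mem_univ_pi, Fin.forall_iff_succAbove i,
        Fin.sum_univ_succAbove _ i, Fin.insertNth_apply_same, Fin.insertNth_apply_succAbove,
        sub_sub_eq_add_sub]
    by_cases hy : y ∈ cube
    · rw [Set.indicator_of_mem hy]
      refine (measure_mono fun x hx => ?_).trans
        (volume_setOf_abs_sq_mul_sub_lt_le (by positivity)
          (m - ∑ j, (y j) ^ 2 * (n (i.succAbove j) : ℝ) ^ 2) δ)
      obtain ⟨⟨hx, -⟩, hδ⟩ := (hmem x).mp hx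
      exact ⟨hx.1, hδ⟩
    · have : {x | i.insertNth x y ∈ S} = ∅ :=
        Set.eq_empty_of_forall_notMem fun x hx => hy ((hmem x).mp hx).1.2
      simp [this]
  calc volume S = ∫⁻ y, volume {x | i.insertNth x y ∈ S} :=
        volume_eq_lintegral_volume_insertNth i hS
    _ ≤ ∫⁻ y, cube.indicator (fun _ => ENNReal.ofReal (δ / (n i : ℝ) ^ 2)) y :=
        lintegral_mono hslice
    _ = ENNReal.ofReal (δ / (n i : ℝ) ^ 2) := by
        rw [lintegral_indicator_const (MeasurableSet.univ_pi fun _ => measurableSet_Icc),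
          volume_pi_pi]
        norm_num [Real.volume_Icc]

theorem stmt_3 (d : ℕ) :
    ∃ C > 0, ∀ m : ℝ, 0 < m → ∀ δ : ℝ, 0 < δ → ∀ n : Fin d → ℤ, n ≠ 0 →
      volume {ν : Fin d → ℝ | (∀ i, ν i ∈ Set.Icc (1 : ℝ) 2) ∧
        |∑ i, (ν i) ^ 2 * (n i : ℝ) ^ 2 - m| < δ}
      ≤ ENNReal.ofReal (C * δ) := by
  refine ⟨1, one_pos, fun m _ δ hδ n hn => ?_⟩
  obtain ⟨i, hi⟩ := Function.ne_iff.mp hn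
  obtain ⟨k, rfl⟩ := Nat.exists_eq_add_one.mpr i.pos
  have hn_sq : (1 : ℝ) ≤ (n i : ℝ) ^ 2 := by
    exact_mod_cast (one_le_sq_iff_one_le_abs (n i)).mpr (Int.one_le_abs hi)
  calc _ ≤ ENNReal.ofReal (δ / (n i : ℝ) ^ 2) := volume_smallDivisor_le n hi m δ
    _ ≤ ENNReal.ofReal (1 * δ) := by
        gcongr
        rw [one_mul]
        exact div_le_self hδ.le hn_sq
end
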